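/- arXiv:0812.3516 — 10 statements merged into one kernel-verified Lean document; each statement's English description precedes it below -/
import Mathlib

section
/- The cyclic identity F(x,y,z) + F(y,z,x) + F(z,x,y) = 0 for all x,y,z ∈ V holds if and only if the associated Nijenhuis-type tensor N* vanishes, i.e. F(x,Jy,z) + F(y,Jx,z) + F(Jx,y,z) + F(Jy,x,z) = 0 for all x,y,z ∈ V. -/
/-- The quasi-Kähler condition on `F` holds iff the associated
Nijenhuis-type tensor `N*` vanishes. -/
theorem quasiKaehler_iff_Nstar_vanishes
    {V : Type*} [AddCommGroup V] [Module ℝ V] [FiniteDimensional ℝ V]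
    (g : LinearMap.BilinForm ℝ V)
    (hg_symm : ∀ x y : V, g x y = g y x)
    (hg_nd : ∀ x : V, (∀ y : V, g x y = 0) → x = 0)
    (J : V →ₗ[ℝ] V)
    (hJ : ∀ x : V, J (J x) = -x)
    (hNorden : ∀ x y : V, g (J x) (J y) = -g x y)
    (F : V →ₗ[ℝ] V →ₗ[ℝ] V →ₗ[ℝ] ℝ)
    (hF1 : ∀ x y z : V, F x y z = F x z y)
    (hF2 : ∀ x y z : V, F x y z = F x (J y) (J z)) :
    (∀ x y z : V, F x y z + F y z x + F z x y = 0) ↔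
    (∀ x y z : V,
      F x (J y) z + F y (J x) z + F (J x) y z + F (J y) x z = 0) := by
  have hflip : ∀ a b c : V, F a b (J c) = - F a (J b) c := by
    intro a b c
    have h := hF2 a (J b) c
    rw [hJ b] at h
    simp only [map_neg, LinearMap.neg_apply] at h
    linarith
  constructor
  · intro hC x y z
    have h1 := hC x (J y) z
    have h2 := hC (J x) y z
    have e1 := hF1 (J y) z x
    have e2 := hflip z x y
    have e3 := hflip y z x
    have e4 := hF1 y (J z) x
    have e5 := hflip y x z
    linarith
  · intro hN x y z
    have hA := hN x y (J z)
    have hB := hN x z (J y)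
    have hCc := hN y z (J x)
    have a1 := hF2 x y z
    have a2 := hF2 y x z
    have a3 := hflip (J x) y z
    have a4 := hflip (J y) x z
    have b1 := hF2 x z y
    have b2 := hF2 z x y
    have b3 := hflip (J x) z y
    have b4 := hflip (J z) x y
    have c1 := hF2 y z x
    have c2 := hF2 z y x
    have c3 := hflip (J y) z x
    have c4 := hflip (J z) y x
    have p1 := hF1 x y z
    have p2 := hF1 y x z
    have p3 := hF1 z y x
    have q1 := hF1 (J x) (J y) z
    have q2 := hF1 (J y) (J x) z
    have q3 := hF1 (J z) (J x) y
    linarith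
end

section
/- Assume F satisfies the quasi-Kähler condition F(x,y,z) + F(y,z,x) + F(z,x,y) = 0 for all x,y,z ∈ V. If moreover the Nijenhuis-type tensor vanishes, i.e. F(x,Jy,z) − F(y,Jx,z) + F(Jx,y,z) − F(Jy,x,z) = 0 for all x,y,z ∈ V, then F = 0 identically (the manifold is Kählerian). -/
/-- A quasi-Kähler structure tensor `F` with vanishing Nijenhuis tensor
vanishes identically (the manifold is Kählerian). -/
theorem quasiKaehler_nijenhuis_zero_implies_kaehler
    {V : Type*} [AddCommGroup V] [Module ℝ V] [FiniteDimensional ℝ V]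
    (g : LinearMap.BilinForm ℝ V)
    (hg_symm : ∀ x y : V, g x y = g y x)
    (hg_nd : ∀ x : V, (∀ y : V, g x y = 0) → x = 0)
    (J : V →ₗ[ℝ] V)
    (hJ : ∀ x : V, J (J x) = -x)
    (hNorden : ∀ x y : V, g (J x) (J y) = -g x y)
    (F : V →ₗ[ℝ] V →ₗ[ℝ] V →ₗ[ℝ] ℝ)
    (hF1 : ∀ x y z : V, F x y z = F x z y)
    (hF2 : ∀ x y z : V, F x y z = F x (J y) (J z))
    (hQK : ∀ x y z : V, F x y z + F y z x + F z x y = 0)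
    (hN : ∀ x y z : V,
      F x (J y) z - F y (J x) z + F (J x) y z - F (J y) x z = 0) :
    ∀ x y z : V, F x y z = 0 := by
  intro x y z
  have e1 := hQK x y z
  have e2 := hN x y (J z)
  have e3 := hN x z (J y)
  have e4 := hQK (J x) y (J z)
  have e5 := hQK (J x) z (J y)
  have s1 := (hF2 x y z).symm
  have s2 := (hF2 y x z).symm
  have s3 := (hF2 x z y).symm
  have s4 := (hF2 z x y).symm
  have s5 := (hF2 y z x).symm
  have s6 := (hF2 z y x).symm
  have s7 : F (J y) x (J z) = -(F (J y) (J x) z) := by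
    have h := hF2 (J y) x (J z)
    rw [hJ] at h
    simpa using h
  have s8 : F (J z) x (J y) = -(F (J z) (J x) y) := by
    have h := hF2 (J z) x (J y)
    rw [hJ] at h
    simpa using h
  have t1 := hF1 y x z
  have t2 := hF1 x y z
  have t3 := hF1 z x y
  linarith [e1, e2, e3, e4, e5, s1, s2, s3, s4, s5, s6, s7, s8, t1, t2, t3]
end

section
/- Define Φ(x,y,z) := (1/2){F(Jz,x,y) − F(x,y,Jz) − F(y,Jz,x)}. Then the quasi-Kähler condition F(x,y,z) + F(y,z,x) + F(z,x,y) = 0 for all x,y,z ∈ V holds if and only if Φ(x,y,z) = F(Jz,x,y) for all x,y,z ∈ V. -/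
/-- With `Φ(x,y,z) = (1/2){F(Jz,x,y) − F(x,y,Jz) − F(y,Jz,x)}`, the
quasi-Kähler condition holds iff `Φ(x,y,z) = F(Jz,x,y)` for all `x,y,z`. -/
theorem quasiKaehler_iff_Phi_eq
    {V : Type*} [AddCommGroup V] [Module ℝ V] [FiniteDimensional ℝ V]
    (g : LinearMap.BilinForm ℝ V)
    (hg_symm : ∀ x y : V, g x y = g y x)
    (hg_nd : ∀ x : V, (∀ y : V, g x y = 0) → x = 0)
    (J : V →ₗ[ℝ] V)
    (hJ : ∀ x : V, J (J x) = -x)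
    (hNorden : ∀ x y : V, g (J x) (J y) = -g x y)
    (F : V →ₗ[ℝ] V →ₗ[ℝ] V →ₗ[ℝ] ℝ)
    (hF1 : ∀ x y z : V, F x y z = F x z y)
    (hF2 : ∀ x y z : V, F x y z = F x (J y) (J z))
    (Φ : V → V → V → ℝ)
    (hΦ : ∀ x y z : V,
      Φ x y z = (1/2) * (F (J z) x y - F x y (J z) - F y (J z) x)) :
    (∀ x y z : V, F x y z + F y z x + F z x y = 0) ↔
    (∀ x y z : V, Φ x y z = F (J z) x y) := by
  constructor
  · intro h x y z
    rw [hΦ]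
    have := h (J z) x y
    linarith
  · intro h x y z
    have := h x y (J z)
    rw [hΦ, hJ] at this
    simp only [map_neg, LinearMap.neg_apply] at this
    linarith
end

section
/- (Theorem 3.3) Assume F satisfies the quasi-Kähler condition and F ≠ 0 (the manifold is non-Kählerian). Set Φ(x,y,z) := F(Jz,x,y). Let T : V×V×V → ℝ be a trilinear form with T(x,y,z) = −T(y,x,z) whose projections satisfy 4p₂(x,y,z) = 2{Φ(z,Jx,Jy) − Φ(z,x,y)} and 4p₃(x,y,z) = −Φ(x,y,z) + Φ(y,z,x) + Φ(x,Jy,Jz) + Φ(y,Jz,Jx) − 2Φ(z,Jx,Jy) (the conditions characterizing the torsion of a natural connection). Then p₂ ≠ 0 and p₃ = 0. -/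
/-- Theorem 3.3: for a natural connection with torsion `T` on a non-Kählerian
quasi-Kähler manifold with Norden metric, `p₂ ≠ 0` and `p₃ = 0`. -/
theorem natural_connection_p2_ne_zero_p3_eq_zero
    {V : Type*} [AddCommGroup V] [Module ℝ V] [FiniteDimensional ℝ V]
    (g : LinearMap.BilinForm ℝ V)
    (hg_symm : ∀ x y : V, g x y = g y x)
    (hg_nd : ∀ x : V, (∀ y : V, g x y = 0) → x = 0)
    (J : V →ₗ[ℝ] V)
    (hJ : ∀ x : V, J (J x) = -x)
    (hNorden : ∀ x y : V, g (J x) (J y) = -g x y)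
    (F : V →ₗ[ℝ] V →ₗ[ℝ] V →ₗ[ℝ] ℝ)
    (hF1 : ∀ x y z : V, F x y z = F x z y)
    (hF2 : ∀ x y z : V, F x y z = F x (J y) (J z))
    (hQK : ∀ x y z : V, F x y z + F y z x + F z x y = 0)
    (hFne : F ≠ 0)
    (Φ : V → V → V → ℝ)
    (hΦ : ∀ x y z : V, Φ x y z = F (J z) x y)
    (T : V →ₗ[ℝ] V →ₗ[ℝ] V →ₗ[ℝ] ℝ)
    (hTalt : ∀ x y z : V, T x y z = -T y x z)
    (p₂ p₃ : V → V → V → ℝ)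
    (hp₂ : ∀ x y z : V, 4 * p₂ x y z =
      T x y z - T (J x) (J y) z + T (J x) y (J z) + T x (J y) (J z))
    (hp₃ : ∀ x y z : V, 8 * p₃ x y z =
      2 * T x y z - T y z x - T z x y - T (J y) z (J x)
      - T z (J x) (J y) + 2 * T (J x) (J y) z - T (J y) (J z) x
      - T (J z) (J x) y + T y (J z) (J x) + T (J z) x (J y))
    (hnat₂ : ∀ x y z : V,
      4 * p₂ x y z = 2 * (Φ z (J x) (J y) - Φ z x y))
    (hnat₃ : ∀ x y z : V,
      4 * p₃ x y z = -Φ x y z + Φ y z x + Φ x (J y) (J z)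
        + Φ y (J z) (J x) - 2 * Φ z (J x) (J y)) :
    p₂ ≠ 0 ∧ p₃ = 0 := by
  constructor
  · intro hp2zero
    apply hFne
    have h0 : ∀ x y z : V, p₂ x y z = 0 := fun x y z => by rw [hp2zero]; rfl
    have A : ∀ x y z : V, F y z (J x) + F (J y) z x = 0 := by
      intro x y z
      have h := hnat₂ x y z
      rw [h0, hΦ, hΦ, hJ y] at h
      simp only [map_neg, LinearMap.neg_apply] at h
      linarith
    have B : ∀ x y z : V, F y z x = F (J y) z (J x) := by
      intro x y z
      have h := A (J x) y z
      rw [hJ x] at h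
      simp only [map_neg, LinearMap.neg_apply] at h
      linarith
    have C : ∀ x y z : V, F y z x = -F (J y) (J z) x := by
      intro x y z
      have h := B x y z
      rw [hF2 (J y) z (J x), hJ x] at h
      simp only [map_neg, LinearMap.neg_apply] at h
      linarith
    have D : ∀ x y z : V, F (J y) (J x) z = F (J y) (J z) x := by
      intro x y z
      have h1 := C x y z
      have h2 := C z y x
      rw [hF1 y z x] at h1
      linarith
    have E : ∀ x y z : V, F y (J x) z = F y (J z) x := by
      intro x y z
      have h := D x (J y) z
      rw [hJ y] at h
      simp only [map_neg, LinearMap.neg_apply] at h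
      linarith
    have Z : ∀ x y z : V, F y x z = 0 := by
      intro x y z
      have h := E (J x) y z
      rw [hJ x, ← hF2 y z x, hF1 y z x] at h
      simp only [map_neg, LinearMap.neg_apply] at h
      linarith
    ext x y z
    simp [Z]
  · funext x y z
    have h := hnat₃ x y z
    rw [hΦ x y z, hΦ y z x, hΦ x (J y) (J z), hΦ y (J z) (J x),
      hΦ z (J x) (J y), hJ z, hJ x, hJ y] at h
    simp only [map_neg, LinearMap.neg_apply] at h
    have q1 := hQK (J z) (J x) (J y)
    have r1 := hF2 (J z) x y
    have r2 : F (J x) (J y) (J z) = F (J x) y z := (hF2 (J x) y z).symm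
    have r3 : F (J y) (J z) (J x) = F (J y) z x := (hF2 (J y) z x).symm
    have q2 := hQK x (J y) z
    have q3 := hQK (J x) y z
    have s1 : F z x (J y) = -F z (J x) y := by
      have := hF2 z x (J y)
      rw [hJ y] at this
      simp only [map_neg, LinearMap.neg_apply] at this
      linarith
    have s2 : F x y (J z) = -F x (J y) z := by
      have := hF2 x y (J z)
      rw [hJ z] at this
      simp only [map_neg, LinearMap.neg_apply] at this
      linarith
    have s3 : F y z (J x) = -F y (J z) x := by
      have := hF2 y z (J x)
      rw [hJ x] at this
      simp only [map_neg, LinearMap.neg_apply] at this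
      linarith
    have : p₃ x y z = 0 := by linarith
    simpa using this
end

section
/- (Equalities (4.5)) Assume F satisfies the quasi-Kähler condition and define T(x,y,z) := (1/2){F(x,Jy,z) + F(Jx,y,z)}. Then for all x,y,z ∈ V: T(x,y,z) = −T(y,x,z) and T(Jx,y,z) = T(x,Jy,z) = −T(x,y,Jz). -/
/-- Equalities (4.5): properties of the torsion of the canonical connection
on a quasi-Kähler manifold with Norden metric. -/
theorem canonical_torsion_properties
    {V : Type*} [AddCommGroup V] [Module ℝ V] [FiniteDimensional ℝ V]
    (g : LinearMap.BilinForm ℝ V)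
    (hg_symm : ∀ x y : V, g x y = g y x)
    (hg_nd : ∀ x : V, (∀ y : V, g x y = 0) → x = 0)
    (J : V →ₗ[ℝ] V)
    (hJ : ∀ x : V, J (J x) = -x)
    (hNorden : ∀ x y : V, g (J x) (J y) = -g x y)
    (F : V →ₗ[ℝ] V →ₗ[ℝ] V →ₗ[ℝ] ℝ)
    (hF1 : ∀ x y z : V, F x y z = F x z y)
    (hF2 : ∀ x y z : V, F x y z = F x (J y) (J z))
    (hQK : ∀ x y z : V, F x y z + F y z x + F z x y = 0)
    (T : V → V → V → ℝ)
    (hT : ∀ x y z : V,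
      T x y z = (1/2) * (F x (J y) z + F (J x) y z)) :
    ∀ x y z : V,
      T x y z = -T y x z ∧
      T (J x) y z = T x (J y) z ∧
      T x (J y) z = -T x y (J z) := by
  have hA : ∀ x y z : V, F x (J y) z = -F x y (J z) := by
    intro x y z
    rw [hF2 x (J y) z, hJ]
    simp
  intro x y z
  refine ⟨?_, ?_, ?_⟩
  · have h1 := hQK x (J y) z
    have h2 := hQK (J x) y z
    have h3 := hF1 (J y) z x
    have h4 := hF1 y z (J x)
    have h5 := hA z x y
    have h6 := hF1 z x (J y)
    rw [hT x y z, hT y x z]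
    linarith
  · rw [hT (J x) y z, hT x (J y) z, hJ x, hJ y]
    simp
    ring
  · rw [hT x (J y) z, hT x y (J z), hJ y]
    have h1 := hA (J x) y z
    have h2 : F x (J y) (J z) = F x y z := (hF2 x y z).symm
    simp [h1, h2]
    ring
end

section
/- (Equality (4.10)) Assume F satisfies the quasi-Kähler condition and define T(x,y,z) := (1/2){F(x,Jy,z) + F(Jx,y,z)}. Then F(x,y,z) = T(x,z,Jy) − T(x,Jy,z) for all x,y,z ∈ V, i.e. the tensor F is recovered from the torsion of the canonical connection. -/
/-- Equality (4.10): the tensor `F` is recovered from the torsion of the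
canonical connection: `F(x,y,z) = T(x,z,Jy) − T(x,Jy,z)`. -/
theorem F_from_canonical_torsion
    {V : Type*} [AddCommGroup V] [Module ℝ V] [FiniteDimensional ℝ V]
    (g : LinearMap.BilinForm ℝ V)
    (hg_symm : ∀ x y : V, g x y = g y x)
    (hg_nd : ∀ x : V, (∀ y : V, g x y = 0) → x = 0)
    (J : V →ₗ[ℝ] V)
    (hJ : ∀ x : V, J (J x) = -x)
    (hNorden : ∀ x y : V, g (J x) (J y) = -g x y)
    (F : V →ₗ[ℝ] V →ₗ[ℝ] V →ₗ[ℝ] ℝ)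
    (hF1 : ∀ x y z : V, F x y z = F x z y)
    (hF2 : ∀ x y z : V, F x y z = F x (J y) (J z))
    (hQK : ∀ x y z : V, F x y z + F y z x + F z x y = 0)
    (T : V → V → V → ℝ)
    (hT : ∀ x y z : V,
      T x y z = (1/2) * (F x (J y) z + F (J x) y z)) :
    ∀ x y z : V, F x y z = T x z (J y) - T x (J y) z := by
  intro x y z
  rw [hT, hT, hJ y]
  have h1 : F x (J z) (J y) = F x y z := by rw [hF1, ← hF2]
  have h2 : F (J x) z (J y) = F (J x) (J y) z := hF1 _ _ _
  have h3 : F x (-y) z = - F x y z := by simp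
  linarith
end

section
/- (Equality (4.14)) Fix a basis (e_i) of V and let (g^{ij}) be the inverse of the Gram matrix (g(e_i,e_j)). Then for any F with the stated symmetries: Σ_{i,j} g^{ij} F(w,e_i,e_j) = 0 for all w ∈ V; consequently, if F satisfies the quasi-Kähler condition and Q(x,y,z) := (1/4){F(y,Jx,z) − F(Jy,x,z) + 2F(x,Jy,z)}, then Σ_{i,j} g^{ij} Q(e_i,e_j,z) = 0 for all z ∈ V. -/
/-!
Write `tr f = ∑ g^{ij} f(e_i, e_j)` for a function `f` of two vectors. As `(g^{ij})` is symmetric,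
`tr` does not see a swap of the arguments and kills antisymmetric `f`. As `J` is
anti-orthogonal for `g` and `J² = -1`, its matrix satisfies `J g⁻¹ Jᵀ = -g⁻¹`, so
`tr f(J·, J·) = -tr f` for bilinear `f`; applied to the `J`-invariant form `F w` this gives the
first identity. For the second, the cyclic identity and the first one give `tr F(·, ·, z) = 0`,
hence `tr F(·, J·, z) = -tr F(·, ·, Jz) = 0`; the form `F(w, J·, ·)` is antisymmetric, and the
cyclic identity at `(Jx, y, z)` combines these into `tr F(J·, ·, z) = 0`. Up to swaps, the three
terms of `Q` are among these contractions.
-/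

open Matrix

section Contraction

variable {R V ι : Type*} [CommRing R] [AddCommGroup V] [Module R V] [Fintype ι]

noncomputable def contraction (b : Module.Basis ι R V) (N : Matrix ι ι R) :
    (V → V → R) →ₗ[R] R where
  toFun f := ∑ i, ∑ j, N i j * f (b i) (b j)
  map_add' f f' := by simp only [Pi.add_apply, mul_add, Finset.sum_add_distrib]
  map_smul' c f := by
    simp only [Pi.smul_apply, smul_eq_mul, RingHom.id_apply, Finset.mul_sum, mul_left_comm]

variable (b : Module.Basis ι R V) {N : Matrix ι ι R}

theorem contraction_apply (f : V → V → R) :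
    contraction b N f = ∑ i, ∑ j, N i j * f (b i) (b j) := rfl

theorem contraction_neg_matrix (f : V → V → R) : contraction b (-N) f = -contraction b N f := by
  simp only [contraction_apply, Matrix.neg_apply, neg_mul, Finset.sum_neg_distrib]

theorem contraction_flip (hN : N.IsSymm) (f : V → V → R) :
    contraction b N (fun x y => f y x) = contraction b N f := by
  rw [contraction_apply, contraction_apply, Finset.sum_comm]
  simp only [hN.apply]

theorem contraction_eq_zero_of_antisymm [NoZeroDivisors R] [CharZero R] (hN : N.IsSymm)
    {f : V → V → R} (hf : ∀ x y, f x y = -f y x) : contraction b N f = 0 := by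
  refine CharZero.eq_neg_self_iff.mp ?_
  calc contraction b N f = contraction b N (fun x y => f y x) := (contraction_flip b hN f).symm
    _ = contraction b N (-f) := congrArg _ (funext₂ fun x y => hf y x)
    _ = -contraction b N f := map_neg _ f

theorem contraction_eq_trace [DecidableEq ι] (B : V →ₗ[R] V →ₗ[R] R) :
    contraction b N (B · ·) = trace (N * (LinearMap.toMatrix₂ b b B)ᵀ) := by
  simp [contraction_apply, trace, Matrix.mul_apply, LinearMap.toMatrix₂_apply]

theorem contraction_compl₁₂ [DecidableEq ι] (B : V →ₗ[R] V →ₗ[R] R) (u v : V →ₗ[R] V) :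
    contraction b N (fun x y => B (u x) (v y)) =
      contraction b (LinearMap.toMatrix b b u * N * (LinearMap.toMatrix b b v)ᵀ) (B · ·) := by
  have h := contraction_eq_trace b (N := N) (B.compl₁₂ u v)
  rw [LinearMap.toMatrix₂_compl₁₂ b b] at h
  refine h.trans ?_
  rw [contraction_eq_trace]
  simp only [transpose_mul, transpose_transpose, Matrix.mul_assoc]
  rw [trace_mul_comm (LinearMap.toMatrix b b u)]
  simp only [Matrix.mul_assoc]

end Contraction

theorem Matrix.mul_mul_transpose_eq_neg_of_transpose_mul_mul_eq_neg {R n : Type*} [CommRing R]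
    [Fintype n] [DecidableEq n] {G H M : Matrix n n R} (hGH : G * H = 1) (hM : M * M = -1)
    (hMG : Mᵀ * G * M = -G) : M * H * Mᵀ = -H := by
  have hinv : G * (M * H * Mᵀ) = -1 := by
    calc G * (M * H * Mᵀ) = -((Mᵀ * G * M) * M * H * Mᵀ) := by rw [hMG]; noncomm_ring
      _ = Mᵀ * (G * H) * Mᵀ := by simp only [Matrix.mul_assoc, hM]; noncomm_ring
      _ = -1 := by rw [hGH, Matrix.mul_one, ← transpose_mul, hM, transpose_neg, transpose_one]
  calc M * H * Mᵀ = H * G * (M * H * Mᵀ) := by rw [mul_eq_one_comm.mp hGH, Matrix.one_mul]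
    _ = -H := by rw [Matrix.mul_assoc, hinv, Matrix.mul_neg, Matrix.mul_one]

section Norden

variable {R V ι : Type*} [CommRing R] [AddCommGroup V] [Module R V] [Fintype ι] [DecidableEq ι]
  (b : Module.Basis ι R V) {g : LinearMap.BilinForm R V} {J : V →ₗ[R] V} {H : Matrix ι ι R}

theorem toMatrix_mul_mul_transpose_eq_neg (hJ : ∀ x, J (J x) = -x)
    (hg : ∀ x y, g (J x) (J y) = -g x y) (hH : LinearMap.toMatrix₂ b b g * H = 1) :
    LinearMap.toMatrix b b J * H * (LinearMap.toMatrix b b J)ᵀ = -H := by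
  refine mul_mul_transpose_eq_neg_of_transpose_mul_mul_eq_neg hH ?_ ?_
  · rw [← LinearMap.toMatrix_mul, show J * J = -1 from LinearMap.ext hJ, map_neg,
      LinearMap.toMatrix_one]
  · rw [← LinearMap.toMatrix₂_compl₁₂ b b, show g.compl₁₂ J J = -g from LinearMap.ext₂ hg]
    exact (LinearMap.toMatrix₂ b b).map_neg g

theorem contraction_eq_zero_of_invariant [NoZeroDivisors R] [CharZero R] (hJ : ∀ x, J (J x) = -x)
    (hg : ∀ x y, g (J x) (J y) = -g x y) (hH : LinearMap.toMatrix₂ b b g * H = 1)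
    (B : V →ₗ[R] V →ₗ[R] R) (hB : ∀ x y, B (J x) (J y) = B x y) :
    contraction b H (B · ·) = 0 := by
  have h := contraction_compl₁₂ b (N := H) B J J
  rw [toMatrix_mul_mul_transpose_eq_neg b hJ hg hH, contraction_neg_matrix] at h
  simp only [hB] at h
  exact CharZero.eq_neg_self_iff.mp h

end Norden

section QuasiKahler

variable {R V ι : Type*} [CommRing R] [AddCommGroup V] [Module R V] [Fintype ι]
  (b : Module.Basis ι R V) {N : Matrix ι ι R} {F : V →ₗ[R] V →ₗ[R] V →ₗ[R] R} {J : V →ₗ[R] V}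

theorem contraction_fst_snd_eq_zero [NoZeroDivisors R] [CharZero R] (hN : N.IsSymm)
    (hF1 : ∀ x y z, F x y z = F x z y) (hF0 : ∀ w, contraction b N (F w · ·) = 0)
    (hQK : ∀ x y z, F x y z + F y z x + F z x y = 0) (z : V) :
    contraction b N (fun x y => F x y z) = 0 := by
  have hsum : (fun x y => F x y z) + (fun x y => F y z x) + (F z · ·) = 0 :=
    funext₂ fun x y => hQK x y z
  have hmid : contraction b N (fun x y => F y z x) = contraction b N (fun x y => F x y z) := by
    simp only [hF1 _ z]
    exact contraction_flip b hN _
  have h := congrArg (contraction b N) hsum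
  rw [map_add, map_add, hmid, hF0, map_zero, add_zero] at h
  exact add_self_eq_zero.mp h

theorem contraction_fst_J_snd_eq_zero (hJ : ∀ x, J (J x) = -x)
    (hF2 : ∀ x y z, F x y z = F x (J y) (J z))
    (hE : ∀ z, contraction b N (fun x y => F x y z) = 0) (z : V) :
    contraction b N (fun x y => F x (J y) z) = 0 := by
  have h : (fun x y => F x (J y) z) = -fun x y => F x y (J z) :=
    funext₂ fun x y => by simp [hF2 x (J y) z, hJ]
  rw [h, map_neg, hE, neg_zero]

theorem contraction_J_snd_thd_eq_zero [NoZeroDivisors R] [CharZero R] (hN : N.IsSymm)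
    (hJ : ∀ x, J (J x) = -x) (hF1 : ∀ x y z, F x y z = F x z y)
    (hF2 : ∀ x y z, F x y z = F x (J y) (J z)) (w : V) :
    contraction b N (fun x y => F w (J x) y) = 0 :=
  contraction_eq_zero_of_antisymm b hN fun x y => by
    rw [hF2 w (J x) y, hJ, map_neg, LinearMap.neg_apply, hF1]

theorem contraction_J_fst_snd_eq_zero (hN : N.IsSymm) (hF1 : ∀ x y z, F x y z = F x z y)
    (hQK : ∀ x y z, F x y z + F y z x + F z x y = 0)
    (hC : ∀ z, contraction b N (fun x y => F x (J y) z) = 0)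
    (hD : ∀ w, contraction b N (fun x y => F w (J x) y) = 0) (z : V) :
    contraction b N (fun x y => F (J x) y z) = 0 := by
  have h : (fun x y => F (J x) y z) = -((fun x y => F y (J x) z) + fun x y => F z (J x) y) :=
    funext₂ fun x y => by
      simp only [Pi.neg_apply, Pi.add_apply]
      linear_combination hQK (J x) y z - hF1 y z (J x)
  rw [h, map_neg, map_add, contraction_flip b hN (fun x y => F x (J y) z), hC, hD, add_zero,
    neg_zero]

end QuasiKahler

theorem contraction_F_and_Q_vanish_general
    {V : Type*} [AddCommGroup V] [Module ℝ V]
    (g : LinearMap.BilinForm ℝ V)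
    (hg_symm : ∀ x y : V, g x y = g y x)
    (J : V →ₗ[ℝ] V)
    (hJ : ∀ x : V, J (J x) = -x)
    (hNorden : ∀ x y : V, g (J x) (J y) = -g x y)
    (F : V →ₗ[ℝ] V →ₗ[ℝ] V →ₗ[ℝ] ℝ)
    (hF1 : ∀ x y z : V, F x y z = F x z y)
    (hF2 : ∀ x y z : V, F x y z = F x (J y) (J z))
    {ι : Type*} [Fintype ι] [DecidableEq ι]
    (b : Module.Basis ι ℝ V)
    (Ginv : Matrix ι ι ℝ)
    (hGinv : (Matrix.of fun i j => g (b i) (b j)) * Ginv = 1) :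
    (∀ w : V, ∑ i, ∑ j, Ginv i j * F w (b i) (b j) = 0) ∧
    ((∀ x y z : V, F x y z + F y z x + F z x y = 0) →
      ∀ Q : V → V → V → ℝ,
      (∀ x y z : V,
        Q x y z = (1/4) * (F y (J x) z - F (J y) x z + 2 * F x (J y) z)) →
      ∀ z : V, ∑ i, ∑ j, Ginv i j * Q (b i) (b j) z = 0) := by
  have hG : LinearMap.toMatrix₂ b b g = Matrix.of fun i j => g (b i) (b j) :=
    Matrix.ext fun i j => LinearMap.toMatrix₂_apply b b g i j
  have hGsymm : (Matrix.of fun i j => g (b i) (b j)).IsSymm :=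
    IsSymm.ext fun i j => hg_symm (b j) (b i)
  have hN : Ginv.IsSymm := inv_eq_right_inv hGinv ▸ hGsymm.inv
  have hF0 (w : V) : contraction b Ginv (F w · ·) = 0 :=
    contraction_eq_zero_of_invariant b hJ hNorden (hG ▸ hGinv) (F w) fun x y => (hF2 w x y).symm
  refine ⟨hF0, fun hQK Q hQ z => ?_⟩
  have hC := contraction_fst_J_snd_eq_zero b hJ hF2 (contraction_fst_snd_eq_zero b hN hF1 hF0 hQK)
  have hB := contraction_J_fst_snd_eq_zero b hN hF1 hQK hC
    (contraction_J_snd_thd_eq_zero b hN hJ hF1 hF2)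
  have hQfun : (fun x y => Q x y z) = (1 / 4 : ℝ) • ((fun x y => F y (J x) z) -
      (fun x y => F (J y) x z) + (2 : ℝ) • fun x y => F x (J y) z) :=
    funext₂ fun x y => hQ x y z
  show contraction b Ginv (fun x y => Q x y z) = 0
  rw [hQfun, map_smul, map_add, map_sub, map_smul, contraction_flip b hN (fun x y => F x (J y) z),
    contraction_flip b hN (fun x y => F (J x) y z), hC, hB]
  simp

/-- Equality (4.14): the contraction `g^{ij} F(w,e_i,e_j)` vanishes, and
consequently the contraction `g^{ij} Q(e_i,e_j,z)` of the canonical potential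
vanishes on a quasi-Kähler manifold with Norden metric. -/
theorem contraction_F_and_Q_vanish
    {V : Type*} [AddCommGroup V] [Module ℝ V] [FiniteDimensional ℝ V]
    (g : LinearMap.BilinForm ℝ V)
    (hg_symm : ∀ x y : V, g x y = g y x)
    (hg_nd : ∀ x : V, (∀ y : V, g x y = 0) → x = 0)
    (J : V →ₗ[ℝ] V)
    (hJ : ∀ x : V, J (J x) = -x)
    (hNorden : ∀ x y : V, g (J x) (J y) = -g x y)
    (F : V →ₗ[ℝ] V →ₗ[ℝ] V →ₗ[ℝ] ℝ)
    (hF1 : ∀ x y z : V, F x y z = F x z y)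
    (hF2 : ∀ x y z : V, F x y z = F x (J y) (J z))
    {ι : Type*} [Fintype ι] [DecidableEq ι]
    (b : Module.Basis ι ℝ V)
    (Ginv : Matrix ι ι ℝ)
    (hGinv : (Matrix.of fun i j => g (b i) (b j)) * Ginv = 1) :
    (∀ w : V, ∑ i, ∑ j, Ginv i j * F w (b i) (b j) = 0) ∧
    ((∀ x y z : V, F x y z + F y z x + F z x y = 0) →
      ∀ Q : V → V → V → ℝ,
      (∀ x y z : V,
        Q x y z = (1/4) * (F y (J x) z - F (J y) x z + 2 * F x (J y) z)) →
      ∀ z : V, ∑ i, ∑ j, Ginv i j * Q (b i) (b j) z = 0) :=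
  contraction_F_and_Q_vanish_general g hg_symm J hJ hNorden F hF1 hF2 b Ginv hGinv
end

section
/- (Equality (2.10)) Assume F satisfies the quasi-Kähler condition. Fix a basis (e_i) of V, let (g^{ij}) be the inverse of the Gram matrix (g(e_i,e_j)), and define the square norm ‖∇J‖ := Σ g^{ij} g^{ks} g^{pq} F(e_i,e_k,e_p) F(e_j,e_s,e_q). Then ‖∇J‖ = −2 Σ g^{ij} g^{ks} g^{pq} F(e_i,e_k,e_p) F(e_s,e_j,e_q). -/
/-!
The symmetry of `F` in its last two slots and the cyclic identity give
`F(e_j,e_s,e_q) = -F(e_s,e_j,e_q) - F(e_q,e_j,e_s)`, and after exchanging the index pairs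
`(k,s) ↔ (p,q)` the second term contracts against `F(e_i,e_k,e_p)` to the same value as the
first, so the square norm is `-2` times the contraction with the first two slots swapped.
-/

open Finset

section Contraction

variable {ι : Type*} [Fintype ι]

theorem sum_sum_sum_sum_comm_pairs {M : Type*} [AddCommMonoid M] (f : ι → ι → ι → ι → M) :
    ∑ k, ∑ s, ∑ p, ∑ q, f k s p q = ∑ k, ∑ s, ∑ p, ∑ q, f p q k s := by
  calc ∑ k, ∑ s, ∑ p, ∑ q, f k s p q
      = ∑ p, ∑ k, ∑ s, ∑ q, f k s p q := (sum_congr rfl fun _ _ => sum_comm).trans sum_comm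
    _ = ∑ p, ∑ q, ∑ k, ∑ s, f k s p q :=
      sum_congr rfl fun _ _ => (sum_congr rfl fun _ _ => sum_comm).trans sum_comm

variable {R : Type*} [CommRing R]

def tripleContract (G : Matrix ι ι R) (A B : ι → ι → ι → R) : R :=
  ∑ i, ∑ j, ∑ k, ∑ s, ∑ p, ∑ q, G i j * G k s * G p q * A i k p * B j s q

theorem tripleContract_rotate_eq_swap (G : Matrix ι ι R) (A : ι → ι → ι → R)
    (hA : ∀ i k p, A i k p = A i p k) :
    tripleContract G A (fun j s q => A q j s) = tripleContract G A (fun j s q => A s j q) := by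
  refine sum_congr rfl fun i _ => sum_congr rfl fun j _ => ?_
  rw [sum_sum_sum_sum_comm_pairs]
  refine sum_congr rfl fun k _ => sum_congr rfl fun s _ =>
    sum_congr rfl fun p _ => sum_congr rfl fun q _ => ?_
  rw [hA i p k]
  ring

theorem tripleContract_self_eq_neg_two_mul (G : Matrix ι ι R) (A : ι → ι → ι → R)
    (hA : ∀ i k p, A i k p = A i p k) (hcyc : ∀ i k p, A i k p + A k p i + A p i k = 0) :
    tripleContract G A A = -2 * tripleContract G A (fun j s q => A s j q) := by
  have hA_eq : A = fun j s q => -A s j q - A q j s := by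
    funext j s q
    linear_combination hcyc j s q + hA s j q
  calc tripleContract G A A
      = tripleContract G A (fun j s q => -A s j q - A q j s) := congrArg _ hA_eq
    _ = -tripleContract G A (fun j s q => A s j q) - tripleContract G A (fun j s q => A q j s) := by
      simp only [tripleContract, mul_sub, mul_neg, sum_sub_distrib, sum_neg_distrib]
    _ = -2 * tripleContract G A (fun j s q => A s j q) := by
      rw [tripleContract_rotate_eq_swap G A hA]
      ring

end Contraction

theorem square_norm_nablaJ_quasiKaehler_general
    {V : Type*} [AddCommGroup V] [Module ℝ V]
    (F : V →ₗ[ℝ] V →ₗ[ℝ] V →ₗ[ℝ] ℝ)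
    (hF1 : ∀ x y z : V, F x y z = F x z y)
    (hQK : ∀ x y z : V, F x y z + F y z x + F z x y = 0)
    {ι : Type*} [Fintype ι]
    (b : Module.Basis ι ℝ V)
    (Ginv : Matrix ι ι ℝ) :
    (∑ i, ∑ j, ∑ k, ∑ s, ∑ p, ∑ q,
      Ginv i j * Ginv k s * Ginv p q *
        F (b i) (b k) (b p) * F (b j) (b s) (b q)) =
    -2 * (∑ i, ∑ j, ∑ k, ∑ s, ∑ p, ∑ q,
      Ginv i j * Ginv k s * Ginv p q *
        F (b i) (b k) (b p) * F (b s) (b j) (b q)) :=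
  tripleContract_self_eq_neg_two_mul Ginv (fun i k p => F (b i) (b k) (b p))
    (fun _ _ _ => hF1 _ _ _) (fun _ _ _ => hQK _ _ _)

/-- Equality (2.10): on a quasi-Kähler manifold with Norden metric the square
norm of `∇J` satisfies `‖∇J‖ = −2 g^{ij} g^{ks} g((∇_{e_i}J)e_k, (∇_{e_s}J)e_j)`. -/
theorem square_norm_nablaJ_quasiKaehler
    {V : Type*} [AddCommGroup V] [Module ℝ V] [FiniteDimensional ℝ V]
    (g : LinearMap.BilinForm ℝ V)
    (hg_symm : ∀ x y : V, g x y = g y x)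
    (hg_nd : ∀ x : V, (∀ y : V, g x y = 0) → x = 0)
    (J : V →ₗ[ℝ] V)
    (hJ : ∀ x : V, J (J x) = -x)
    (hNorden : ∀ x y : V, g (J x) (J y) = -g x y)
    (F : V →ₗ[ℝ] V →ₗ[ℝ] V →ₗ[ℝ] ℝ)
    (hF1 : ∀ x y z : V, F x y z = F x z y)
    (hF2 : ∀ x y z : V, F x y z = F x (J y) (J z))
    (hQK : ∀ x y z : V, F x y z + F y z x + F z x y = 0)
    {ι : Type*} [Fintype ι] [DecidableEq ι]
    (b : Module.Basis ι ℝ V)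
    (Ginv : Matrix ι ι ℝ)
    (hGinv : (Matrix.of fun i j => g (b i) (b j)) * Ginv = 1) :
    (∑ i, ∑ j, ∑ k, ∑ s, ∑ p, ∑ q,
      Ginv i j * Ginv k s * Ginv p q *
        F (b i) (b k) (b p) * F (b j) (b s) (b q)) =
    -2 * (∑ i, ∑ j, ∑ k, ∑ s, ∑ p, ∑ q,
      Ginv i j * Ginv k s * Ginv p q *
        F (b i) (b k) (b p) * F (b s) (b j) (b q)) :=
  square_norm_nablaJ_quasiKaehler_general F hF1 hQK b Ginv
end

section
/- (Algebraic heart of Lemma 5.1 / Theorem 5.2) Let T : V×V×V → ℝ be trilinear with T(x,y,z) = −T(y,x,z) and T(Jx,y,z) = T(x,Jy,z) = −T(x,y,Jz) for all x,y,z ∈ V, and let T♯(x,y) ∈ V denote the g-dual vector, g(T♯(x,y),z) = T(x,y,z). Let S : V×V×V×V → ℝ be quadrilinear with S(x,y,z,w) = −S(x,z,y,w) and S(x,Jy,z,w) = S(x,y,Jz,w) = −S(x,y,z,Jw) for all x,y,z,w. If the first Bianchi-type identity Σ_{cyclic in x,y,z} { S(x,y,z,w) + T(T♯(x,y),z,w)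 } = 0 holds for all x,y,z,w ∈ V, then T(T♯(x,y),z,w) = 0 for all x,y,z,w ∈ V. -/
/-- Algebraic heart of Lemma 5.1 / Theorem 5.2: if the first Bianchi-type
identity holds for `S` (playing the role of `∇'T`) and the torsion `T` of the
canonical connection, then `T(T♯(x,y),z,w) = 0`. -/
theorem bianchi_implies_TT_zero
    {V : Type*} [AddCommGroup V] [Module ℝ V] [FiniteDimensional ℝ V]
    (g : LinearMap.BilinForm ℝ V)
    (hg_symm : ∀ x y : V, g x y = g y x)
    (hg_nd : ∀ x : V, (∀ y : V, g x y = 0) → x = 0)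
    (J : V →ₗ[ℝ] V)
    (hJ : ∀ x : V, J (J x) = -x)
    (hNorden : ∀ x y : V, g (J x) (J y) = -g x y)
    (T : V →ₗ[ℝ] V →ₗ[ℝ] V →ₗ[ℝ] ℝ)
    (hTalt : ∀ x y z : V, T x y z = -T y x z)
    (hTJ1 : ∀ x y z : V, T (J x) y z = T x (J y) z)
    (hTJ2 : ∀ x y z : V, T x (J y) z = -T x y (J z))
    (Tsharp : V →ₗ[ℝ] V →ₗ[ℝ] V)
    (hTsharp : ∀ x y z : V, g (Tsharp x y) z = T x y z)
    (S : V →ₗ[ℝ] V →ₗ[ℝ] V →ₗ[ℝ] V →ₗ[ℝ] ℝ)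
    (hSalt : ∀ x y z w : V, S x y z w = -S x z y w)
    (hSJ1 : ∀ x y z w : V, S x (J y) z w = S x y (J z) w)
    (hSJ2 : ∀ x y z w : V, S x y (J z) w = -S x y z (J w))
    (hBianchi : ∀ x y z w : V,
      (S x y z w + T (Tsharp x y) z w) +
      (S y z x w + T (Tsharp y z) x w) +
      (S z x y w + T (Tsharp z x) y w) = 0) :
    ∀ x y z w : V, T (Tsharp x y) z w = 0 := by
  -- g(Ja, b) = g(a, Jb)
  have hgJ : ∀ a b : V, g (J a) b = g a (J b) := by
    intro a b
    have h := hNorden a (J b)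
    rw [hJ b] at h
    simpa using h
  -- T♯(Jx, y) = - J T♯(x,y)
  have hTsJ1 : ∀ x y : V, Tsharp (J x) y = - J (Tsharp x y) := by
    intro x y
    have key : ∀ v : V, g (Tsharp (J x) y + J (Tsharp x y)) v = 0 := by
      intro v
      have h1 : g (Tsharp (J x) y) v = T (J x) y v := hTsharp _ _ _
      have h2 : T (J x) y v = - T x y (J v) := by rw [hTJ1, hTJ2]
      have h3 : g (J (Tsharp x y)) v = g (Tsharp x y) (J v) := hgJ _ _
      have h4 : g (Tsharp x y) (J v) = T x y (J v) := hTsharp _ _ _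
      have h5 : g (Tsharp (J x) y + J (Tsharp x y)) v
          = g (Tsharp (J x) y) v + g (J (Tsharp x y)) v := by
        simp [map_add]
      rw [h5, h1, h2, h3, h4]; ring
    have h0 := hg_nd _ key
    have := eq_neg_of_add_eq_zero_left h0
    exact this
  -- T♯(x, Jy) = - J T♯(x,y)
  have hTsJ2 : ∀ x y : V, Tsharp x (J y) = - J (Tsharp x y) := by
    intro x y
    have key : ∀ v : V, g (Tsharp x (J y) - Tsharp (J x) y) v = 0 := by
      intro v
      have h1 : g (Tsharp x (J y)) v = T x (J y) v := hTsharp _ _ _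
      have h2 : g (Tsharp (J x) y) v = T (J x) y v := hTsharp _ _ _
      have h5 : g (Tsharp x (J y) - Tsharp (J x) y) v
          = g (Tsharp x (J y)) v - g (Tsharp (J x) y) v := by
        simp [map_sub]
      rw [h5, h1, h2, hTJ1]; ring
    have h0 := hg_nd _ key
    have h6 : Tsharp x (J y) = Tsharp (J x) y := by
      have := sub_eq_zero.mp h0
      exact this
    rw [h6, hTsJ1]
  -- canonical J-moving rules for A(x,y,z,w) := T (T♯ x y) z w
  have r1 : ∀ x y z w : V,
      T (Tsharp (J x) y) z w = T (Tsharp x y) z (J w) := by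
    intro x y z w
    rw [hTsJ1]
    have h : T (J (Tsharp x y)) z w = - T (Tsharp x y) z (J w) := by
      rw [hTJ1, hTJ2]
    simp [h]
  have r2 : ∀ x y z w : V,
      T (Tsharp x (J y)) z w = T (Tsharp x y) z (J w) := by
    intro x y z w
    rw [hTsJ2]
    have h : T (J (Tsharp x y)) z w = - T (Tsharp x y) z (J w) := by
      rw [hTJ1, hTJ2]
    simp [h]
  have rJJ : ∀ (u c d : V), T u c (J (J d)) = - T u c d := by
    intro u c d
    rw [hJ d]
    simp
  -- S-side rules
  have s2 : ∀ a b c d : V, S a (J b) c d = - S a b c (J d) := by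
    intro a b c d
    rw [hSJ1, hSJ2]
  have sJJ : ∀ a b c d : V, S a b c (J (J d)) = - S a b c d := by
    intro a b c d
    rw [hJ d]
    simp
  -- Step 1: cyclic sum of A vanishes (with Jw in last slot)
  have hH' : ∀ x y z w : V,
      T (Tsharp x y) z (J w) + T (Tsharp y z) x (J w)
        + T (Tsharp z x) y (J w) = 0 := by
    intro x y z w
    have I1 := hBianchi (J x) y z w
    have I2 := hBianchi x (J y) z w
    have I3 := hBianchi x y (J z) w
    have I4 := hBianchi (J x) (J y) (J z) w
    have I5 := hBianchi x y z (J w)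
    -- A-term canonicalizations
    have a11 := r1 x y z w
    have a12 := hTJ2 (Tsharp y z) x w
    have a13 := r2 z x y w
    have a21 := r2 x y z w
    have a22 := r1 y z x w
    have a23 := hTJ2 (Tsharp z x) y w
    have a31 := hTJ2 (Tsharp x y) z w
    have a32 := r2 y z x w
    have a33 := r1 z x y w
    -- I4 A-terms, chained
    have b11 := r1 x (J y) (J z) w
    have b12 := r2 x y (J z) (J w)
    have b13 := rJJ (Tsharp x y) (J z) w
    have b21 := r1 y (J z) (J x) w
    have b22 := r2 y z (J x) (J w)
    have b23 := rJJ (Tsharp y z) (J x) w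
    have b31 := r1 z (J x) (J y) w
    have b32 := r2 z x (J y) (J w)
    have b33 := rJJ (Tsharp z x) (J y) w
    -- S-term canonicalizations
    have c12 := hSJ2 y z x w
    have c13 := s2 z x y w
    have c21 := s2 x y z w
    have c23 := hSJ2 z x y w
    have c31 := hSJ2 x y z w
    have c32 := s2 y z x w
    have d11 := s2 (J x) y (J z) w
    have d12 := hSJ2 (J x) y z (J w)
    have d13 := sJJ (J x) y z w
    have d21 := s2 (J y) z (J x) w
    have d22 := hSJ2 (J y) z x (J w)
    have d23 := sJJ (J y) z x w
    have d31 := s2 (J z) x (J y) w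
    have d32 := hSJ2 (J z) x y (J w)
    have d33 := sJJ (J z) x y w
    linarith [I1, I2, I3, I4, I5, a11, a12, a13, a21, a22, a23, a31, a32, a33,
      b11, b12, b13, b21, b22, b23, b31, b32, b33,
      c12, c13, c21, c23, c31, c32,
      d11, d12, d13, d21, d22, d23, d31, d32, d33]
  -- Step 2: cyclic sum of A vanishes
  have hH : ∀ x y z w : V,
      T (Tsharp x y) z w + T (Tsharp y z) x w + T (Tsharp z x) y w = 0 := by
    intro x y z w
    have h := hH' x y z (J w)
    have e1 := rJJ (Tsharp x y) z w
    have e2 := rJJ (Tsharp y z) x w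
    have e3 := rJJ (Tsharp z x) y w
    linarith
  -- Step 3: conclude A = 0
  intro x y z w
  have h1 := hH (J x) y z w
  have h2 := hH x (J y) z w
  have a11 := r1 x y z w
  have a12 := hTJ2 (Tsharp y z) x w
  have a13 := r2 z x y w
  have a21 := r2 x y z w
  have a22 := r1 y z x w
  have a23 := hTJ2 (Tsharp z x) y w
  -- from h1, h2: T (Tsharp x y) z (J w) = 0, for every w
  have key : ∀ v : V, T (Tsharp x y) z (J v) = 0 := by
    intro v
    have h1' := hH (J x) y z v
    have h2' := hH x (J y) z v
    have a11 := r1 x y z v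
    have a12 := hTJ2 (Tsharp y z) x v
    have a13 := r2 z x y v
    have a21 := r2 x y z v
    have a22 := r1 y z x v
    have a23 := hTJ2 (Tsharp z x) y v
    linarith
  have h3 := key (J w)
  have h4 := rJJ (Tsharp x y) z w
  linarith
end

section
/- (Proposition of Section 7) Assume F satisfies the quasi-Kähler condition. Define Q^B(x,y,z) := (1/2) F(x,Jy,z) (the potential of the B-connection), Q^{KT}(x,y,z) := −(1/4){F(x,y,Jz) + F(y,z,Jx) + F(z,x,Jy)} (the potential of the connection with totally skew-symmetric torsion), and Q^C(x,y,z) := (1/4){F(Jz,x,y) − F(x,y,Jz) − F(Jy,x,z)} (the potential of the canonical connection). Then Q^B(x,y,z) = (1/2)( Q^{KT}(x,y,z) + Q^C(x,y,z) ) for all x,y,z ∈ V, i.e. the B-connection is the mean connection of the canonical connection and the KT-connection. -/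
/-- Proposition of Section 7: on a quasi-Kähler manifold with Norden metric
the `B`-connection is the mean connection of the canonical connection and the
`KT`-connection: `Q^B = (1/2)(Q^{KT} + Q^C)`. -/
theorem B_connection_is_mean
    {V : Type*} [AddCommGroup V] [Module ℝ V] [FiniteDimensional ℝ V]
    (g : LinearMap.BilinForm ℝ V)
    (hg_symm : ∀ x y : V, g x y = g y x)
    (hg_nd : ∀ x : V, (∀ y : V, g x y = 0) → x = 0)
    (J : V →ₗ[ℝ] V)
    (hJ : ∀ x : V, J (J x) = -x)
    (hNorden : ∀ x y : V, g (J x) (J y) = -g x y)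
    (F : V →ₗ[ℝ] V →ₗ[ℝ] V →ₗ[ℝ] ℝ)
    (hF1 : ∀ x y z : V, F x y z = F x z y)
    (hF2 : ∀ x y z : V, F x y z = F x (J y) (J z))
    (hQK : ∀ x y z : V, F x y z + F y z x + F z x y = 0)
    (QB QKT QC : V → V → V → ℝ)
    (hQB : ∀ x y z : V, QB x y z = (1/2) * F x (J y) z)
    (hQKT : ∀ x y z : V,
      QKT x y z = -(1/4) * (F x y (J z) + F y z (J x) + F z x (J y)))
    (hQC : ∀ x y z : V,
      QC x y z = (1/4) * (F (J z) x y - F x y (J z) - F (J y) x z)) :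
    ∀ x y z : V, QB x y z = (1/2) * (QKT x y z + QC x y z) := by
  intro x y z
  have hswap : ∀ a b c : V, F a (J b) c = - F a b (J c) := by
    intro a b c
    rw [hF2 a (J b) c, hJ]
    simp
  have e1 : F x (J y) z = - F x y (J z) := hswap x y z
  have e2 : F y (J z) x = - F y z (J x) := hswap y z x
  have e2' : F y (J z) x = F y x (J z) := hF1 y (J z) x
  have e3 : F x (J z) y = - F x z (J y) := hswap x z y
  have e3' : F x (J z) y = F x y (J z) := hF1 x (J z) y
  have c1 := hQK (J z) x y
  have c1' : F y (J z) x = F y x (J z) := hF1 y (J z) x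
  have c2 := hQK (J y) x z
  have c2' : F z (J y) x = F z x (J y) := hF1 z (J y) x
  rw [hQB, hQKT, hQC]
  linarith
end
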